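/- Construction of conditionally i.i.d. recommendations: Let ((Ω⁰,F⁰⁻,P⁰),Λ*,μ*) be a coarse correlated solution of the mean field game, ρ the law of μ*, K(·,m) the regular conditional probability of P⁰ given μ*=m, and κ(·,m) the regular conditional law of Λ* given μ*=m. Let (Ω̄,F̄,P̄) be the completion of ((∏_{i=1}^∞ Ω⁰)×C(P²), (⊗_{i=1}^∞F⁰⁻)⊗B(C(P²))) with P̄ determined on cylinders by P̄(A₁×⋯×A_N×B)=∫_B ∏_{i=1}^N K(A_i,m) ρ(dm), and let μ be the projection onto C(P²). Then there exists a sequence (Λ^i)_{i≥1} of maps from (Ω̄,F̄,P̄) into the strategy spaces such that: (a) each Λ^i is an admissible recommendation and takes values in 𝔸_{(i)}; (b) for every N ≥ 2 the joint law of (Λ¹,…,Λ^N) under P̄ is supported on ∏_{i=1}^N 𝔸_{(i)} ⊆ 𝔸_N^N and equals γ_N(dα¹,…,dα^N)=∫_{C(P²)} ⊗_{i=1}^N κ(dα^i,m) ρ(dm); in particular each pair (Λ^i,μ) has the same distribution as (Λ*,μ*) and the (Λ^i)_{i≥1} are conditionally independent given μ. -/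

import Mathlib

open MeasureTheory ProbabilityTheory Filter
open scoped ENNReal NNReal Topology

noncomputable section

namespace CCE

/-! ### Basic spaces -/

abbrev Rd (d : ℕ) : Type := Fin d → ℝ
abbrev Ctrl (l : ℕ) : Type := Fin l → ℝ

abbrev PathSp (d : ℕ) (T : ℝ) : Type := C(Set.Icc (0:ℝ) T, Rd d)

instance (d : ℕ) (T : ℝ) : MeasurableSpace (PathSp d T) := borel _
instance (d : ℕ) (T : ℝ) : BorelSpace (PathSp d T) := ⟨rfl⟩

/-- Evaluate a path at a time `t` (clamped to `[0,T]`). -/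
def evalPath {d : ℕ} {T : ℝ} (hT : 0 ≤ T) (y : PathSp d T) (t : ℝ) : Rd d :=
  y (Set.projIcc 0 T hT t)

abbrev timeMeasure (T : ℝ) : Measure ℝ := volume.restrict (Set.Icc (0:ℝ) T)

/-! ### Wasserstein distance of order 2, second moments, flows of measures -/

/-- 2-Wasserstein distance associated to a cost (distance) function `ρ`,
defined through couplings. -/
def Wass2 {E : Type*} [MeasurableSpace E] (ρ : E → E → ℝ) (μ ν : Measure E) : ℝ :=
  Real.sqrt (sInf {c : ℝ | ∃ π : Measure (E × E), IsProbabilityMeasure π ∧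
    π.map Prod.fst = μ ∧ π.map Prod.snd = ν ∧ c = ∫ p, ρ p.1 p.2 ^ 2 ∂π})

/-- 2-Wasserstein distance on measures on `ℝ^d`. -/
def W2R {d : ℕ} (μ ν : Measure (Rd d)) : ℝ := Wass2 dist μ ν

/-- A probability measure on `ℝ^d` with finite second moment, i.e. an element of `P²(ℝ^d)`. -/
def MemP2 {d : ℕ} (μ : Measure (Rd d)) : Prop :=
  IsProbabilityMeasure μ ∧ ∫⁻ x, (‖x‖₊ : ℝ≥0∞) ^ 2 ∂μ < ∞

/-- Raw flows of measures on `ℝ^d` (the ambient space of `C([0,T];P²(ℝ^d))`). -/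
abbrev FlowRaw (d : ℕ) : Type := ℝ → Measure (Rd d)

/-- An element of `C([0,T];P²(ℝ^d))`: all time marginals are probability measures with a
finite second moment, and the flow is continuous in the 2-Wasserstein distance on `[0,T]`. -/
structure IsFlow (d : ℕ) (T : ℝ) (m : FlowRaw d) : Prop where
  memP2 : ∀ t, MemP2 (m t)
  cont : ∀ t ∈ Set.Icc (0:ℝ) T, ∀ ε > 0, ∃ δ > 0,
    ∀ s ∈ Set.Icc (0:ℝ) T, |s - t| < δ → W2R (m s) (m t) < ε

/-- The supremum-in-time 2-Wasserstein distance on `C([0,T];P²(ℝ^d))`. -/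
def flowDist (d : ℕ) (T : ℝ) (m₁ m₂ : FlowRaw d) : ℝ :=
  sSup {c : ℝ | ∃ t ∈ Set.Icc (0:ℝ) T, c = W2R (m₁ t) (m₂ t)}

/-! ### Relaxed controls -/

/-- The ambient space of the set `𝒱` of relaxed controls: measures on `[0,T] × A ⊆ ℝ × ℝ^l`. -/
abbrev MeasV (l : ℕ) : Type := Measure (ℝ × Ctrl l)

/-- An element of `𝒱`: a positive measure on `[0,T] × A` whose time marginal is the
Lebesgue measure on `[0,T]`. -/
def IsRelaxedMeasure {l : ℕ} (T : ℝ) (A : Set (Ctrl l)) (q : MeasV l) : Prop :=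
  q.map Prod.fst = timeMeasure T ∧ (∀ᵐ p ∂q, p.1 ∈ Set.Icc (0:ℝ) T ∧ p.2 ∈ A)

/-- The relaxed control `q_t(da) dt` associated to a family `t ↦ r t` of measures on `A`. -/
def relaxedMeasure {l : ℕ} (T : ℝ) (r : ℝ → Measure (Ctrl l)) : MeasV l :=
  (timeMeasure T).bind fun t => (r t).map fun a => (t, a)

/-! ### Filtrations (as functions into σ-algebras), progressive measurability -/

/-- The σ-algebra generated by the `P`-null sets. -/
def nullAug {Ω : Type*} [MeasurableSpace Ω] (P : Measure Ω) : MeasurableSpace Ω :=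
  MeasurableSpace.generateFrom {s | ∃ u, MeasurableSet u ∧ P u = 0 ∧ s ⊆ u}

/-- A filtration: a monotone family of sub-σ-algebras. -/
def IsFiltr {Ω : Type*} [m : MeasurableSpace Ω] (F : ℝ → MeasurableSpace Ω) : Prop :=
  Monotone F ∧ ∀ t, F t ≤ m

/-- Usual conditions: completeness and right continuity. -/
def UsualConditions {Ω : Type*} [MeasurableSpace Ω] (P : Measure Ω)
    (F : ℝ → MeasurableSpace Ω) : Prop :=
  (∀ t, nullAug P ≤ F t) ∧ ∀ t, F t = ⨅ s ∈ Set.Ioi t, F s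

/-- Progressive measurability of a process with respect to a filtration. -/
def ProgMble {Ω β : Type*} [MeasurableSpace β] (F : ℝ → MeasurableSpace Ω)
    (u : ℝ → Ω → β) : Prop :=
  ∀ t : ℝ, Measurable[MeasurableSpace.prod (inferInstance : MeasurableSpace (Set.Iic t))
    (F t)] (fun p : Set.Iic t × Ω => u p.1 p.2)

/-- The filtration generated by an initial datum `ξ` and a process `W`. -/
def genFil {Ω : Type*} [MeasurableSpace Ω] {d : ℕ} (ξ : Ω → Rd d) (W : ℝ → Ω → Rd d) :
    ℝ → MeasurableSpace Ω :=
  fun t => MeasurableSpace.comap ξ inferInstance ⊔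
    ⨆ s ∈ Set.Icc (0:ℝ) t, MeasurableSpace.comap (W s) inferInstance

/-! ### Brownian motion -/

/-- `W` is a `d`-dimensional `F`-Brownian motion under `P`. -/
structure IsBM {Ω : Type*} [MeasurableSpace Ω] (d : ℕ) (P : Measure Ω)
    (F : ℝ → MeasurableSpace Ω) (W : ℝ → Ω → Rd d) : Prop where
  adapted : ∀ t, Measurable[F t] (W t)
  start : ∀ᵐ ω ∂P, W 0 ω = 0
  cont : ∀ᵐ ω ∂P, Continuous fun t => W t ω
  coordLaw : ∀ s t : ℝ, 0 ≤ s → s ≤ t → ∀ i : Fin d,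
    P.map (fun ω => W t ω i - W s ω i) = gaussianReal 0 (Real.toNNReal (t - s))
  coordIndep : ∀ s t : ℝ, 0 ≤ s → s ≤ t →
    iIndepFun
      (fun i ω => W t ω i - W s ω i) P
  incIndep : ∀ s t : ℝ, 0 ≤ s → s ≤ t →
    Indep (MeasurableSpace.comap (fun ω => W t ω - W s ω) inferInstance) (F s) P


/-! ### SDE solutions -/

open scoped Classical in
/-- The continuous path of the process `X` at the scenario `ω`, as an element of `C^d`. -/
def pathOf {Ω : Type*} {d : ℕ} (T : ℝ) (X : ℝ → Ω → Rd d) (ω : Ω) : PathSp d T :=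
  if h : Continuous fun t => X t ω then ⟨fun t => X t.1 ω, h.comp continuous_subtype_val⟩
  else ⟨fun _ => 0, continuous_const⟩

/-- `X` solves the SDE `dX_t = b(t,X_t,μ_t,α_t) dt + dW_t`, `X_0 = ξ`, on `[0,T]`
(strict, i.e. non-relaxed, control `α`). -/
def SolvesCtrlSDE {Ω : Type*} [MeasurableSpace Ω] {d l : ℕ} (T : ℝ) (P : Measure Ω)
    (b : ℝ → Rd d → Measure (Rd d) → Ctrl l → Rd d)
    (μflow : Ω → FlowRaw d) (α : ℝ → Ω → Ctrl l) (ξ : Ω → Rd d)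
    (W X : ℝ → Ω → Rd d) : Prop :=
  (∀ ω, Continuous fun t => X t ω) ∧
  ∀ᵐ ω ∂P, ∀ t ∈ Set.Icc (0:ℝ) T,
    X t ω = ξ ω + (∫ s in Set.Icc (0:ℝ) t, b s (X s ω) (μflow ω s) (α s ω)) + W t ω

/-- `X` solves the relaxed SDE `dX_t = ∫_A b(t,X_t,μ_t,a) r_t(da) dt + dW_t`, `X_0 = ξ`. -/
def SolvesRelaxedSDE {Ω : Type*} [MeasurableSpace Ω] {d l : ℕ} (T : ℝ) (P : Measure Ω)
    (b : ℝ → Rd d → Measure (Rd d) → Ctrl l → Rd d)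
    (μflow : Ω → FlowRaw d) (r : ℝ → Ω → Measure (Ctrl l)) (ξ : Ω → Rd d)
    (W X : ℝ → Ω → Rd d) : Prop :=
  (∀ ω, Continuous fun t => X t ω) ∧
  ∀ᵐ ω ∂P, ∀ t ∈ Set.Icc (0:ℝ) T,
    X t ω = ξ ω + (∫ s in Set.Icc (0:ℝ) t, ∫ a, b s (X s ω) (μflow ω s) a ∂(r s ω)) + W t ω

/-- Consistency: for every `t ∈ [0,T]`, `μ_t` is a version of the conditional law of `X_t`
given `σ(μ)`. -/
def Consistent {Ω : Type*} [MeasurableSpace Ω] {d : ℕ} (T : ℝ) (P : Measure Ω)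
    (μflow : Ω → FlowRaw d) (X : ℝ → Ω → Rd d) : Prop :=
  ∀ t ∈ Set.Icc (0:ℝ) T, ∀ S : Set (Rd d), MeasurableSet S →
    (fun ω => ((μflow ω t) S).toReal) =ᵐ[P]
      P[fun ω => S.indicator (fun _ => (1:ℝ)) (X t ω)|MeasurableSpace.comap μflow inferInstance]

/-! ### Standing assumptions -/

/-- Standing Assumptions (A). -/
structure Standing (d l : ℕ) (T : ℝ) (A : Set (Ctrl l)) (ν : Measure (Rd d))
    (b : ℝ → Rd d → Measure (Rd d) → Ctrl l → Rd d)
    (f : ℝ → Rd d → Measure (Rd d) → Ctrl l → ℝ)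
    (g : Rd d → Measure (Rd d) → ℝ) : Prop where
  T_pos : 0 < T
  A_compact : IsCompact A
  A_nonempty : A.Nonempty
  ν_prob : IsProbabilityMeasure ν
  ν_moment : ∃ p : ℝ, 4 < p ∧ ∫⁻ x, (‖x‖₊ : ℝ≥0∞) ^ p ∂ν < ∞
  b_meas : Measurable fun q : ℝ × Rd d × Measure (Rd d) × Ctrl l => b q.1 q.2.1 q.2.2.1 q.2.2.2
  f_meas : Measurable fun q : ℝ × Rd d × Measure (Rd d) × Ctrl l => f q.1 q.2.1 q.2.2.1 q.2.2.2
  g_meas : Measurable fun q : Rd d × Measure (Rd d) => g q.1 q.2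
  b_lip : ∃ L : ℝ, 0 ≤ L ∧ ∀ t ∈ Set.Icc (0:ℝ) T, ∀ x x' : Rd d, ∀ m m' : Measure (Rd d),
    MemP2 m → MemP2 m' → ∀ a ∈ A, ∀ a' ∈ A,
      ‖b t x m a - b t x' m' a'‖ ≤ L * (‖a - a'‖ + ‖x - x'‖ + W2R m m')
  bf_bdd : ∃ a₀ ∈ A, ∃ C : ℝ, ∀ t ∈ Set.Icc (0:ℝ) T,
    ‖b t 0 (Measure.dirac 0) a₀‖ ≤ C ∧ |f t 0 (Measure.dirac 0) a₀| ≤ C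
  fg_locLip : ∃ L : ℝ, 0 ≤ L ∧ ∀ t ∈ Set.Icc (0:ℝ) T, ∀ x x' : Rd d, ∀ m m' : Measure (Rd d),
    MemP2 m → MemP2 m' → ∀ a ∈ A, ∀ a' ∈ A,
      |f t x m a - f t x' m' a'| + |g x m - g x' m'| ≤
        L * (1 + ‖x‖ + ‖x'‖ + Real.sqrt (∫ y, ‖y‖ ^ 2 ∂m) + Real.sqrt (∫ y, ‖y‖ ^ 2 ∂m')
            + ‖a‖ + ‖a'‖) * (‖x - x'‖ + W2R m m' + ‖a - a'‖)

/-- Convexity Assumption (B): for all `(t,x,m)`, the set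
`K(t,x,m) = {(b(t,x,m,a),z) : a ∈ A, f(t,x,m,a) ≤ z}` is closed and convex. -/
def AssumptionB {d l : ℕ} (T : ℝ) (A : Set (Ctrl l))
    (b : ℝ → Rd d → Measure (Rd d) → Ctrl l → Rd d)
    (f : ℝ → Rd d → Measure (Rd d) → Ctrl l → ℝ) : Prop :=
  ∀ t ∈ Set.Icc (0:ℝ) T, ∀ x : Rd d, ∀ m : Measure (Rd d), MemP2 m →
    IsClosed {p : Rd d × ℝ | ∃ a ∈ A, p.1 = b t x m a ∧ f t x m a ≤ p.2} ∧
    Convex ℝ {p : Rd d × ℝ | ∃ a ∈ A, p.1 = b t x m a ∧ f t x m a ≤ p.2}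

/-- Empirical measure of `N` points in `ℝ^d`. -/
def empMeas {d : ℕ} (N : ℕ) (x : Fin N → Rd d) : Measure (Rd d) :=
  (N : ℝ≥0∞)⁻¹ • ∑ j : Fin N, Measure.dirac (x j)


/-! ### The auxiliary zero-sum game -/

/-- The canonical space `C^d × 𝒱 × C(P²)` of the auxiliary zero-sum game. -/
abbrev GameSp (d l : ℕ) (T : ℝ) : Type := PathSp d T × MeasV l × FlowRaw d

/-- The requirements on a tuple `((Ω,F,𝔽,P),ξ,W,μ,r)` (together with the solution `X` of the
corresponding relaxed SDE) defining a strategy for the maximizing player A. -/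
def IsPlayerASetup {Ω : Type*} [mΩ : MeasurableSpace Ω] {d l : ℕ} (T : ℝ) (A : Set (Ctrl l))
    (ν : Measure (Rd d)) (b : ℝ → Rd d → Measure (Rd d) → Ctrl l → Rd d)
    (P : Measure Ω) (F : ℝ → MeasurableSpace Ω) (ξ : Ω → Rd d) (W : ℝ → Ω → Rd d)
    (μflow : Ω → FlowRaw d) (r : ℝ → Ω → Measure (Ctrl l)) (X : ℝ → Ω → Rd d) : Prop :=
  IsProbabilityMeasure P ∧ IsFiltr F ∧ UsualConditions P F ∧
  IsBM d P F W ∧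
  Measurable[F 0] ξ ∧ P.map ξ = ν ∧
  Measurable[F 0] μflow ∧ (∀ ω, IsFlow d T (μflow ω)) ∧
  IndepFun μflow (fun ω => (ξ ω, fun t => W t ω)) P ∧
  (∀ t ω, IsProbabilityMeasure (r t ω)) ∧ (∀ t ω, ∀ᵐ a ∂(r t ω), a ∈ A) ∧
  ProgMble F r ∧ ProgMble F X ∧
  SolvesRelaxedSDE T P b μflow r ξ W X ∧
  Consistent T P μflow X

/-- The law `Γ = P ∘ (X, 𝔯, μ)⁻¹` on `C^d × 𝒱 × C(P²)`. -/
def tripleLaw {Ω : Type*} [MeasurableSpace Ω] {d l : ℕ} (T : ℝ) (P : Measure Ω)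
    (X : ℝ → Ω → Rd d) (r : ℝ → Ω → Measure (Ctrl l)) (μflow : Ω → FlowRaw d) :
    Measure (GameSp d l T) :=
  P.map fun ω => (pathOf T X ω, relaxedMeasure T (fun t => r t ω), μflow ω)

/-- The set `𝒦` of strategies of the maximizing player A. -/
def Kset (d l : ℕ) (T : ℝ) (A : Set (Ctrl l)) (ν : Measure (Rd d))
    (b : ℝ → Rd d → Measure (Rd d) → Ctrl l → Rd d) : Set (Measure (GameSp d l T)) :=
  {Γ | ∃ (Ω : Type) (mΩ : MeasurableSpace Ω) (tΩ : TopologicalSpace Ω),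
    @PolishSpace Ω tΩ ∧ @BorelSpace Ω tΩ mΩ ∧
    ∃ (P : Measure Ω) (F : ℝ → MeasurableSpace Ω) (ξ : Ω → Rd d) (W : ℝ → Ω → Rd d)
      (μflow : Ω → FlowRaw d) (r : ℝ → Ω → Measure (Ctrl l)) (X : ℝ → Ω → Rd d),
      IsPlayerASetup T A ν b P F ξ W μflow r X ∧ Γ = tripleLaw T P X r μflow}

/-- The requirements on a tuple `((Ω,F,𝔽,P),ξ,W,r)` (with the family `m ↦ X^m` of solutions)
defining a strategy for the minimizing player B. -/
def IsPlayerBSetup {Ω : Type*} [mΩ : MeasurableSpace Ω] {d l : ℕ} (T : ℝ) (A : Set (Ctrl l))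
    (ν : Measure (Rd d)) (P : Measure Ω) (F : ℝ → MeasurableSpace Ω) (ξ : Ω → Rd d)
    (W : ℝ → Ω → Rd d) (r : ℝ → Ω → Measure (Ctrl l)) : Prop :=
  IsProbabilityMeasure P ∧ IsFiltr F ∧ UsualConditions P F ∧
  IsBM d P F W ∧ Measurable[F 0] ξ ∧ P.map ξ = ν ∧
  (∀ t ω, IsProbabilityMeasure (r t ω)) ∧ (∀ t ω, ∀ᵐ a ∂(r t ω), a ∈ A) ∧
  ProgMble F r

/-- The set `𝒬` of strategies of the minimizing player B: stochastic kernels from `C(P²)`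
to `C^d × 𝒱` induced by a tuple and the associated family of controlled SDEs with
deterministic flows of measures. -/
def Qset (d l : ℕ) (T : ℝ) (A : Set (Ctrl l)) (ν : Measure (Rd d))
    (b : ℝ → Rd d → Measure (Rd d) → Ctrl l → Rd d) :
    Set (FlowRaw d → Measure (PathSp d T × MeasV l)) :=
  {Sg | Measurable Sg ∧
    ∃ (Ω : Type) (mΩ : MeasurableSpace Ω) (tΩ : TopologicalSpace Ω),
      @PolishSpace Ω tΩ ∧ @BorelSpace Ω tΩ mΩ ∧
      ∃ (P : Measure Ω) (F : ℝ → MeasurableSpace Ω) (ξ : Ω → Rd d) (W : ℝ → Ω → Rd d)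
        (r : ℝ → Ω → Measure (Ctrl l)),
        IsPlayerBSetup T A ν P F ξ W r ∧
        ∃ X : FlowRaw d → ℝ → Ω → Rd d, ∀ m : FlowRaw d, IsFlow d T m →
          ProgMble F (X m) ∧ SolvesRelaxedSDE T P b (fun _ => m) r ξ W (X m) ∧
          Sg m = P.map fun ω => (pathOf T (X m) ω, relaxedMeasure T fun t => r t ω)}

/-- The cost functional `𝔉(y,q,m) = ∫₀ᵀ∫_A f(t,y_t,m_t,a) q_t(da) dt + g(y_T,m_T)`. -/
def costF {d l : ℕ} {T : ℝ} (hT : 0 ≤ T)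
    (f : ℝ → Rd d → Measure (Rd d) → Ctrl l → ℝ) (g : Rd d → Measure (Rd d) → ℝ)
    (z : GameSp d l T) : ℝ :=
  (∫ p : ℝ × Ctrl l, f p.1 (evalPath hT z.1 p.1) (z.2.2 p.1) p.2 ∂z.2.1) +
    g (evalPath hT z.1 T) (z.2.2 T)

/-- The payoff functional `𝔭(Γ,Σ)` of the auxiliary zero-sum game. -/
def payoff {d l : ℕ} {T : ℝ} (hT : 0 ≤ T)
    (f : ℝ → Rd d → Measure (Rd d) → Ctrl l → ℝ) (g : Rd d → Measure (Rd d) → ℝ)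
    (Γ : Measure (GameSp d l T)) (Sg : FlowRaw d → Measure (PathSp d T × MeasV l)) : ℝ :=
  (∫ m, (∫ yq : PathSp d T × MeasV l, costF hT f g (yq.1, yq.2, m) ∂(Sg m))
      ∂(Γ.map fun z => z.2.2)) -
    ∫ z, costF hT f g z ∂Γ

/-- Lower value `v^A` of the auxiliary zero-sum game. -/
def lowerValue (d l : ℕ) {T : ℝ} (hT : 0 ≤ T) (A : Set (Ctrl l)) (ν : Measure (Rd d))
    (b : ℝ → Rd d → Measure (Rd d) → Ctrl l → Rd d)
    (f : ℝ → Rd d → Measure (Rd d) → Ctrl l → ℝ) (g : Rd d → Measure (Rd d) → ℝ) : ℝ :=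
  sSup {v : ℝ | ∃ Γ ∈ Kset d l T A ν b,
    v = sInf {w : ℝ | ∃ Sg ∈ Qset d l T A ν b, w = payoff hT f g Γ Sg}}

/-- Upper value `v^B` of the auxiliary zero-sum game. -/
def upperValue (d l : ℕ) {T : ℝ} (hT : 0 ≤ T) (A : Set (Ctrl l)) (ν : Measure (Rd d))
    (b : ℝ → Rd d → Measure (Rd d) → Ctrl l → Rd d)
    (f : ℝ → Rd d → Measure (Rd d) → Ctrl l → ℝ) (g : Rd d → Measure (Rd d) → ℝ) : ℝ :=
  sInf {w : ℝ | ∃ Sg ∈ Qset d l T A ν b,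
    w = sSup {v : ℝ | ∃ Γ ∈ Kset d l T A ν b, v = payoff hT f g Γ Sg}}

/-- A metric-like cost on the canonical space `C^d × 𝒱 × C(P²)`: sum of the uniform distance
on paths, the Lévy-Prokhorov distance (metrizing weak convergence) on relaxed controls, and
the uniform 2-Wasserstein distance on flows of measures. -/
def gameCost (d l : ℕ) (T : ℝ) : GameSp d l T → GameSp d l T → ℝ :=
  fun z z' => dist z.1 z'.1 + levyProkhorovDist z.2.1 z'.2.1 + flowDist d T z.2.2 z'.2.2

/-- Convergence in the 2-Wasserstein distance on `P²(C^d × 𝒱 × C(P²))`. -/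
def TendstoW2Game {d l : ℕ} {T : ℝ} (Γs : ℕ → Measure (GameSp d l T))
    (Γ : Measure (GameSp d l T)) : Prop :=
  Tendsto (fun n => Wass2 (gameCost d l T) (Γs n) Γ) atTop (𝓝 0)


/-! ### Open loop strategies as L²-classes of progressively measurable processes -/

/-- The ambient `L²` space of the set `𝔸` of open loop strategies: square integrable
functions on `[0,T] × Ω` with values in `ℝ^l`, identified up to `Leb ⊗ P`-a.e. equality. -/
abbrev LpCtrl (l : ℕ) {Ωs : Type*} [MeasurableSpace Ωs] (T : ℝ) (Ps : Measure Ωs) : Type _ :=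
  ↥(Lp (α := ℝ × Ωs) (Ctrl l) 2 ((timeMeasure T).prod Ps))

instance (l : ℕ) {Ωs : Type*} [MeasurableSpace Ωs] (T : ℝ) (Ps : Measure Ωs) :
    MeasurableSpace (LpCtrl l T Ps) := borel _

/-- `α ∈ 𝔸`: `α` admits an `A`-valued `F`-progressively measurable representative. -/
def IsOLStrategy {Ωs : Type*} [MeasurableSpace Ωs] {l : ℕ} (T : ℝ) (A : Set (Ctrl l))
    (Ps : Measure Ωs) (Fs : ℝ → MeasurableSpace Ωs) (α : LpCtrl l T Ps) : Prop :=
  ∃ u : ℝ → Ωs → Ctrl l, ProgMble Fs u ∧ (∀ t ω, u t ω ∈ A) ∧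
    (⇑α) =ᵐ[(timeMeasure T).prod Ps] fun p => u p.1 p.2

/-- An admissible recommendation `((Ω⁰,F⁰⁻,P⁰),Λ)` together with its associated strategy
`λ` on the (completed) product space. -/
structure IsAdmissibleRec {Ω₀ Ωs : Type*} [m₀ : MeasurableSpace Ω₀] [ms : MeasurableSpace Ωs]
    {l : ℕ} (T : ℝ) (A : Set (Ctrl l)) (P₀ : Measure Ω₀) (Ps : Measure Ωs)
    (Fs : ℝ → MeasurableSpace Ωs) (Λ : Ω₀ → LpCtrl l T Ps)
    (lam : ℝ → Ω₀ × Ωs → Ctrl l) : Prop where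
  meas : Measurable Λ
  vals : ∀ ω₀, IsOLStrategy T A Ps Fs (Λ ω₀)
  prog : ProgMble (fun t => (m₀.prod (Fs t)) ⊔ nullAug (P₀.prod Ps)) lam
  Avalued : ∀ t p, lam t p ∈ A
  sect : ∀ᵐ ω₀ ∂P₀,
    (fun p : ℝ × Ωs => lam p.1 (ω₀, p.2)) =ᵐ[(timeMeasure T).prod Ps] ⇑(Λ ω₀)

/-- Expected cost `E[∫₀ᵀ f(t,X_t,μ_t,α_t) dt + g(X_T,μ_T)]`. -/
def Jcost {Ω : Type*} [MeasurableSpace Ω] {d l : ℕ} (T : ℝ) (P : Measure Ω)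
    (f : ℝ → Rd d → Measure (Rd d) → Ctrl l → ℝ) (g : Rd d → Measure (Rd d) → ℝ)
    (μflow : Ω → FlowRaw d) (α : ℝ → Ω → Ctrl l) (X : ℝ → Ω → Rd d) : ℝ :=
  ∫ ω, ((∫ t in Set.Icc (0:ℝ) T, f t (X t ω) (μflow ω t) (α t ω)) +
    g (X T ω) (μflow ω T)) ∂P

/-- The base filtered probability space `(Ω*,F*,𝔽*,P*)` of the mean field game, carrying a
Brownian motion `W` and an independent initial datum `ξ` with law `ν`; `F*` is the
`P*`-augmentation of the filtration generated by `(ξ,W)`. -/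
structure IsMFGBase {Ωs : Type*} [MeasurableSpace Ωs] (d : ℕ) (ν : Measure (Rd d))
    (Ps : Measure Ωs) (Fs : ℝ → MeasurableSpace Ωs) (ξs : Ωs → Rd d)
    (Ws : ℝ → Ωs → Rd d) : Prop where
  prob : IsProbabilityMeasure Ps
  filtr : IsFiltr Fs
  bm : IsBM d Ps Fs Ws
  ξ_meas : Measurable ξs
  ξ_law : Ps.map ξs = ν
  ξ_indep_W : IndepFun ξs (fun ω => fun t => Ws t ω) Ps
  F_eq : ∀ t, Fs t = genFil ξs Ws t ⊔ nullAug Ps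

/-- `((Ω⁰,F⁰⁻,P⁰),Λ,μ)` (with associated strategy `λ`) is a coarse correlated solution of
the mean field game: `(Λ,μ)` is a correlated flow, the state equation driven by the
recommendation satisfies the consistency condition, and no open loop deviation `β`
improves the expected cost. -/
def IsCCEMFGSolution {Ω₀ Ωs : Type*} [m₀ : MeasurableSpace Ω₀] [ms : MeasurableSpace Ωs]
    {d l : ℕ} (T : ℝ) (A : Set (Ctrl l))
    (b : ℝ → Rd d → Measure (Rd d) → Ctrl l → Rd d)
    (f : ℝ → Rd d → Measure (Rd d) → Ctrl l → ℝ) (g : Rd d → Measure (Rd d) → ℝ)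
    (P₀ : Measure Ω₀) (Ps : Measure Ωs) (Fs : ℝ → MeasurableSpace Ωs)
    (ξs : Ωs → Rd d) (Ws : ℝ → Ωs → Rd d)
    (Λ : Ω₀ → LpCtrl l T Ps) (lam : ℝ → Ω₀ × Ωs → Ctrl l) (μ : Ω₀ → FlowRaw d) : Prop :=
  IsAdmissibleRec T A P₀ Ps Fs Λ lam ∧
  Measurable μ ∧ (∀ ω₀, IsFlow d T (μ ω₀)) ∧
  ∃ X : ℝ → Ω₀ × Ωs → Rd d,
    SolvesCtrlSDE T (P₀.prod Ps) b (fun p => μ p.1) lam (fun p => ξs p.2)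
      (fun t p => Ws t p.2) X ∧
    Consistent T (P₀.prod Ps) (fun p => μ p.1) X ∧
    ∀ β : LpCtrl l T Ps, IsOLStrategy T A Ps Fs β →
      ∀ u : ℝ → Ωs → Ctrl l, ProgMble Fs u → (∀ t ω, u t ω ∈ A) →
        ((⇑β) =ᵐ[(timeMeasure T).prod Ps] fun p => u p.1 p.2) →
        ∀ Y : ℝ → Ω₀ × Ωs → Rd d,
          SolvesCtrlSDE T (P₀.prod Ps) b (fun p => μ p.1) (fun t p => u t p.2)
            (fun p => ξs p.2) (fun t p => Ws t p.2) Y →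
          Jcost T (P₀.prod Ps) f g (fun p => μ p.1) lam X ≤
            Jcost T (P₀.prod Ps) f g (fun p => μ p.1) (fun t p => u t p.2) Y

/-! ### The N-player game -/

/-- The base probability space of the `N`-player games, carrying the i.i.d. sequence
`(ξ^i, W^i)` of initial data and Brownian motions. -/
structure IsNPlayerBase {Ω₁ : Type*} [MeasurableSpace Ω₁] (d : ℕ) (ν : Measure (Rd d))
    (P₁ : Measure Ω₁) (ξ : ℕ → Ω₁ → Rd d) (W : ℕ → ℝ → Ω₁ → Rd d) : Prop where
  prob : IsProbabilityMeasure P₁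
  ξ_meas : ∀ i, Measurable (ξ i)
  ξ_law : ∀ i, P₁.map (ξ i) = ν
  indep : iIndepFun
    (fun i ω => (ξ i ω, fun t => W i t ω)) P₁
  pair_indep : ∀ i, IndepFun (ξ i) (fun ω => fun t => W i t ω) P₁
  bmN : ∀ N i, i < N →
    IsBM d P₁
      (fun t => (⨆ j ∈ Finset.range N, genFil (ξ j) (W j) t) ⊔ nullAug P₁) (W i)

/-- The filtration `F^{1,N}`: the `P¹`-augmentation of the filtration generated by the
first `N` initial data and Brownian motions. -/
def genFilN {Ω₁ : Type*} [MeasurableSpace Ω₁] {d : ℕ} (N : ℕ) (P₁ : Measure Ω₁)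
    (ξ : ℕ → Ω₁ → Rd d) (W : ℕ → ℝ → Ω₁ → Rd d) : ℝ → MeasurableSpace Ω₁ :=
  fun t => (⨆ j ∈ Finset.range N, genFil (ξ j) (W j) t) ⊔ nullAug P₁

/-- The filtration `F^{(i)}`: the `P¹`-augmentation of the filtration generated by
`(ξ^i, W^i)` alone. -/
def genFilI {Ω₁ : Type*} [MeasurableSpace Ω₁] {d : ℕ} (i : ℕ) (P₁ : Measure Ω₁)
    (ξ : ℕ → Ω₁ → Rd d) (W : ℕ → ℝ → Ω₁ → Rd d) : ℝ → MeasurableSpace Ω₁ :=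
  fun t => genFil (ξ i) (W i) t ⊔ nullAug P₁

/-- An admissible recommendation profile `((Ω⁰,F⁰⁻,P⁰),Λ)` for the `N`-player game,
together with its associated correlated strategy profile `λ = (λ¹,…,λ^N)`. -/
structure IsAdmissibleProfile {Ω₀ Ω₁ : Type*} [m₀ : MeasurableSpace Ω₀]
    [m₁ : MeasurableSpace Ω₁] {d l : ℕ} (N : ℕ) (T : ℝ) (A : Set (Ctrl l))
    (P₀ : Measure Ω₀) (P₁ : Measure Ω₁) (ξ : ℕ → Ω₁ → Rd d) (W : ℕ → ℝ → Ω₁ → Rd d)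
    (ΛN : Ω₀ → Fin N → LpCtrl l T P₁)
    (lamN : ℝ → Ω₀ × Ω₁ → Fin N → Ctrl l) : Prop where
  meas : Measurable ΛN
  vals : ∀ ω₀ j, IsOLStrategy T A P₁ (genFilN N P₁ ξ W) (ΛN ω₀ j)
  prog : ProgMble (fun t => (m₀.prod (genFilN N P₁ ξ W t)) ⊔ nullAug (P₀.prod P₁)) lamN
  Avalued : ∀ t p j, lamN t p j ∈ A
  sect : ∀ j : Fin N, ∀ᵐ ω₀ ∂P₀,
    (fun p : ℝ × Ω₁ => lamN p.1 (ω₀, p.2) j) =ᵐ[(timeMeasure T).prod P₁] ⇑(ΛN ω₀ j)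

/-- `X = (X¹,…,X^N)` solves the system of state equations of the `N`-player game with
controls `ctrl = (ctrl¹,…,ctrl^N)` and mean field interaction through the empirical
measure of the states. -/
def SolvesNSystem {Ω : Type*} [MeasurableSpace Ω] {d l : ℕ} (N : ℕ) (T : ℝ) (P : Measure Ω)
    (b : ℝ → Rd d → Measure (Rd d) → Ctrl l → Rd d)
    (ctrl : ℝ → Ω → Fin N → Ctrl l) (ξv : Ω → Fin N → Rd d)
    (Wv : ℝ → Ω → Fin N → Rd d) (X : ℝ → Ω → Fin N → Rd d) : Prop :=
  (∀ ω j, Continuous fun t => X t ω j) ∧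
  ∀ᵐ ω ∂P, ∀ j : Fin N, ∀ t ∈ Set.Icc (0:ℝ) T,
    X t ω j = ξv ω j +
      (∫ s in Set.Icc (0:ℝ) t, b s (X s ω j) (empMeas N (X s ω)) (ctrl s ω j)) + Wv t ω j

/-- The cost of player `j` in the `N`-player game. -/
def JcostN {Ω : Type*} [MeasurableSpace Ω] {d l : ℕ} (N : ℕ) (T : ℝ) (P : Measure Ω)
    (f : ℝ → Rd d → Measure (Rd d) → Ctrl l → ℝ) (g : Rd d → Measure (Rd d) → ℝ)
    (ctrl : ℝ → Ω → Fin N → Ctrl l) (X : ℝ → Ω → Fin N → Rd d) (j : Fin N) : ℝ :=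
  ∫ ω, ((∫ t in Set.Icc (0:ℝ) T, f t (X t ω j) (empMeas N (X t ω)) (ctrl t ω j)) +
    g (X T ω j) (empMeas N (X T ω))) ∂P

/-- `((Ω⁰,F⁰⁻,P⁰),Λ)` (with associated correlated strategy profile `λ`) is an `ε`-coarse
correlated equilibrium of the `N`-player game. -/
def IsEpsCCE {Ω₀ Ω₁ : Type*} [m₀ : MeasurableSpace Ω₀] [m₁ : MeasurableSpace Ω₁]
    {d l : ℕ} (ε : ℝ) (N : ℕ) (T : ℝ) (A : Set (Ctrl l))
    (b : ℝ → Rd d → Measure (Rd d) → Ctrl l → Rd d)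
    (f : ℝ → Rd d → Measure (Rd d) → Ctrl l → ℝ) (g : Rd d → Measure (Rd d) → ℝ)
    (P₀ : Measure Ω₀) (P₁ : Measure Ω₁) (ξ : ℕ → Ω₁ → Rd d) (W : ℕ → ℝ → Ω₁ → Rd d)
    (ΛN : Ω₀ → Fin N → LpCtrl l T P₁)
    (lamN : ℝ → Ω₀ × Ω₁ → Fin N → Ctrl l) : Prop :=
  IsAdmissibleProfile N T A P₀ P₁ ξ W ΛN lamN ∧
  ∀ X : ℝ → Ω₀ × Ω₁ → Fin N → Rd d,
    SolvesNSystem N T (P₀.prod P₁) b (fun t p => lamN t p)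
      (fun p j => ξ j p.2) (fun t p j => W j t p.2) X →
    ∀ i : Fin N, ∀ β : LpCtrl l T P₁, IsOLStrategy T A P₁ (genFilN N P₁ ξ W) β →
      ∀ u : ℝ → Ω₁ → Ctrl l, ProgMble (genFilN N P₁ ξ W) u → (∀ t ω, u t ω ∈ A) →
        ((⇑β) =ᵐ[(timeMeasure T).prod P₁] fun p => u p.1 p.2) →
        ∀ Y : ℝ → Ω₀ × Ω₁ → Fin N → Rd d,
          SolvesNSystem N T (P₀.prod P₁) b
            (fun t p => Function.update (lamN t p) i (u t p.2))
            (fun p j => ξ j p.2) (fun t p j => W j t p.2) Y →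
          JcostN N T (P₀.prod P₁) f g (fun t p => lamN t p) X i ≤
            JcostN N T (P₀.prod P₁) f g
              (fun t p => Function.update (lamN t p) i (u t p.2)) Y i + ε


/-! ### The Yamada-Watanabe setting: SDEs with random coefficients -/

/-- The σ-algebra `B_{t,C^d}` on raw paths, generated by the evaluations up to time `t`. -/
def pathFil (d : ℕ) (t : ℝ) : MeasurableSpace (ℝ → Rd d) :=
  ⨆ s ∈ Set.Iic t, MeasurableSpace.comap (fun y : ℝ → Rd d => y s) inferInstance

/-- The σ-algebra `F^𝒱_t` on relaxed control measures, generated by `q ↦ q(C)` for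
`C ∈ B([0,t] × A)`. -/
def VFil (l : ℕ) (t : ℝ) : MeasurableSpace (MeasV l) :=
  ⨆ C ∈ {C : Set (ℝ × Ctrl l) | MeasurableSet C ∧ C ⊆ Set.Iic t ×ˢ Set.univ},
    MeasurableSpace.comap (fun q : MeasV l => q C) inferInstance

/-- `F`-adaptedness of a `𝒱`-valued random variable. -/
def VAdapted {Ω : Type*} [MeasurableSpace Ω] {l : ℕ} (F : ℝ → MeasurableSpace Ω)
    (r : Ω → MeasV l) : Prop :=
  ∀ t : ℝ, ∀ C : Set (ℝ × Ctrl l), MeasurableSet C → C ⊆ Set.Iic t ×ˢ Set.univ →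
    Measurable[F t] fun ω => r ω C

/-- `G` is progressively measurable in the `𝒱`-variable: if `q` and `q'` agree on
`B([0,t] × A)` then `G(t,x,m,q) = G(t,x,m,q')`. -/
def GProgressive {d l : ℕ} (G : ℝ → Rd d → FlowRaw d → MeasV l → Rd d) : Prop :=
  ∀ (t : ℝ) (x : Rd d) (m : FlowRaw d) (q q' : MeasV l),
    (∀ C : Set (ℝ × Ctrl l), MeasurableSet C → C ⊆ Set.Iic t ×ˢ Set.univ → q C = q' C) →
    G t x m q = G t x m q'

/-- A tuple `𝔘 = ((Ω,F,𝔽,P),ξ,W,μ,𝔯)` for the SDE with random coefficients. -/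
def IsYWTuple {Ω : Type*} [mΩ : MeasurableSpace Ω] {d l : ℕ} (P : Measure Ω)
    (F : ℝ → MeasurableSpace Ω) (ξ : Ω → Rd d) (W : ℝ → Ω → Rd d)
    (μ : Ω → FlowRaw d) (r : Ω → MeasV l) : Prop :=
  IsProbabilityMeasure P ∧ IsFiltr F ∧ UsualConditions P F ∧ IsBM d P F W ∧
    Measurable[F 0] ξ ∧ Measurable[F 0] μ ∧ VAdapted F r

/-- The integral equation `X_t = ξ + ∫₀ᵗ G(s,X_s,μ,𝔯) ds + W_t` on `[0,T]`, with
continuous paths. -/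
def SolvesG {Ω : Type*} [MeasurableSpace Ω] {d l : ℕ} (T : ℝ) (P : Measure Ω)
    (G : ℝ → Rd d → FlowRaw d → MeasV l → Rd d) (ξ : Ω → Rd d) (W : ℝ → Ω → Rd d)
    (μ : Ω → FlowRaw d) (r : Ω → MeasV l) (X : ℝ → Ω → Rd d) : Prop :=
  ∀ᵐ ω ∂P, (Continuous fun t => X t ω) ∧ ∀ t ∈ Set.Icc (0:ℝ) T,
    X t ω = ξ ω + (∫ s in Set.Icc (0:ℝ) t, G s (X s ω) (μ ω) (r ω)) + W t ω

/-- A strong solution: a solution adapted to the `P`-augmentation of `F`. -/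
def IsStrongSolG {Ω : Type*} [MeasurableSpace Ω] {d l : ℕ} (T : ℝ) (P : Measure Ω)
    (G : ℝ → Rd d → FlowRaw d → MeasV l → Rd d) (F : ℝ → MeasurableSpace Ω)
    (ξ : Ω → Rd d) (W : ℝ → Ω → Rd d) (μ : Ω → FlowRaw d) (r : Ω → MeasV l)
    (X : ℝ → Ω → Rd d) : Prop :=
  (∀ t, Measurable[F t ⊔ nullAug P] (X t)) ∧ SolvesG T P G ξ W μ r X

/-- The joint law of `(X,ξ,W,μ,𝔯)`. -/
def ywFullLaw {Ω : Type*} [MeasurableSpace Ω] {d l : ℕ} (P : Measure Ω) (ξ : Ω → Rd d)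
    (W : ℝ → Ω → Rd d) (μ : Ω → FlowRaw d) (r : Ω → MeasV l) (X : ℝ → Ω → Rd d) :
    Measure ((ℝ → Rd d) × Rd d × (ℝ → Rd d) × FlowRaw d × MeasV l) :=
  P.map fun ω => (fun t => X t ω, ξ ω, fun t => W t ω, μ ω, r ω)

/-- The joint law of the data `(ξ,W,μ,𝔯)`. -/
def ywInputLaw {Ω : Type*} [MeasurableSpace Ω] {d l : ℕ} (P : Measure Ω) (ξ : Ω → Rd d)
    (W : ℝ → Ω → Rd d) (μ : Ω → FlowRaw d) (r : Ω → MeasV l) :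
    Measure (Rd d × (ℝ → Rd d) × FlowRaw d × MeasV l) :=
  P.map fun ω => (ξ ω, fun t => W t ω, μ ω, r ω)

/-- Pathwise uniqueness for the SDE with random coefficients: any two strong solutions on a
common tuple are indistinguishable. -/
def PathwiseUniquenessG (d l : ℕ) (T : ℝ)
    (G : ℝ → Rd d → FlowRaw d → MeasV l → Rd d) : Prop :=
  ∀ (Ω : Type) (mΩ : MeasurableSpace Ω) (P : Measure Ω) (F : ℝ → MeasurableSpace Ω)
    (ξ : Ω → Rd d) (W : ℝ → Ω → Rd d) (μ : Ω → FlowRaw d) (r : Ω → MeasV l),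
    IsYWTuple P F ξ W μ r →
    ∀ X X' : ℝ → Ω → Rd d, IsStrongSolG T P G F ξ W μ r X →
      IsStrongSolG T P G F ξ W μ r X' → ∀ᵐ ω ∂P, ∀ t, X t ω = X' t ω



/-- The part of the Standing Assumptions (A) involving only the data `(T, A, ν, b)`. -/
structure StandingB (d l : ℕ) (T : ℝ) (A : Set (Ctrl l)) (ν : Measure (Rd d))
    (b : ℝ → Rd d → Measure (Rd d) → Ctrl l → Rd d) : Prop where
  T_pos : 0 < T
  A_compact : IsCompact A
  A_nonempty : A.Nonempty
  ν_prob : IsProbabilityMeasure ν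
  ν_moment : ∃ p : ℝ, 4 < p ∧ ∫⁻ x, (‖x‖₊ : ℝ≥0∞) ^ p ∂ν < ∞
  b_meas : Measurable fun q : ℝ × Rd d × Measure (Rd d) × Ctrl l => b q.1 q.2.1 q.2.2.1 q.2.2.2
  b_lip : ∃ L : ℝ, 0 ≤ L ∧ ∀ t ∈ Set.Icc (0:ℝ) T, ∀ x x' : Rd d, ∀ m m' : Measure (Rd d),
    MemP2 m → MemP2 m' → ∀ a ∈ A, ∀ a' ∈ A,
      ‖b t x m a - b t x' m' a'‖ ≤ L * (‖a - a'‖ + ‖x - x'‖ + W2R m m')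
  b_bdd : ∃ a₀ ∈ A, ∃ C : ℝ, ∀ t ∈ Set.Icc (0:ℝ) T, ‖b t 0 (Measure.dirac 0) a₀‖ ≤ C


/-! ## Auxiliary lemmas -/

section AuxLemmas

private lemma meas_fst' {α β : Type*} {mα : MeasurableSpace α} {mβ : MeasurableSpace β} :
    @Measurable (α × β) α (mα.prod mβ) mα Prod.fst :=
  measurable_iff_comap_le.mpr le_sup_left

private lemma meas_snd' {α β : Type*} {mα : MeasurableSpace α} {mβ : MeasurableSpace β} :
    @Measurable (α × β) β (mα.prod mβ) mβ Prod.snd :=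
  measurable_iff_comap_le.mpr le_sup_right

private lemma meas_prodMk {α β γ : Type*} {mα : MeasurableSpace α} {mβ : MeasurableSpace β}
    {mγ : MeasurableSpace γ} {f : α → β} {g : α → γ}
    (hf : @Measurable α β mα mβ f) (hg : @Measurable α γ mα mγ g) :
    @Measurable α (β × γ) mα (mβ.prod mγ) fun a => (f a, g a) := by
  rw [measurable_iff_comap_le, MeasurableSpace.prod, MeasurableSpace.comap_sup,
    MeasurableSpace.comap_comp, MeasurableSpace.comap_comp]
  exact sup_le (measurable_iff_comap_le.mp hf) (measurable_iff_comap_le.mp hg)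

private lemma comap_nullAug_le {Ω Ω' : Type*} {mΩ : MeasurableSpace Ω}
    {mΩ' : MeasurableSpace Ω'} {P : Measure Ω} {P' : Measure Ω'} {φ : Ω → Ω'}
    (hφ : Measurable φ)
    (h0 : ∀ u : Set Ω', MeasurableSet u → P' u = 0 → P (φ ⁻¹' u) = 0) :
    MeasurableSpace.comap φ (nullAug P') ≤ nullAug P := by
  have h : nullAug P' =
      MeasurableSpace.generateFrom {s | ∃ u, MeasurableSet u ∧ P' u = 0 ∧ s ⊆ u} := rfl
  rw [h, MeasurableSpace.comap_generateFrom]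
  refine MeasurableSpace.generateFrom_le ?_
  rintro s ⟨s', ⟨u, hu, hu0, hsu⟩, rfl⟩
  exact MeasurableSpace.measurableSet_generateFrom
    ⟨φ ⁻¹' u, hφ hu, h0 u hu hu0, Set.preimage_mono hsu⟩

end AuxLemmas

/-! ## Statement 1: Construction of conditionally i.i.d. recommendations -/

/-- **Construction of conditionally i.i.d. recommendations.** Let `(Λ*,μ*)` be a coarse
correlated MFG solution, `ρ` the law of `μ*`, `K` the regular conditional probability of
`P⁰` given `μ*` and `κ` the regular conditional law of `Λ*` given `μ*`. On the space
`Ω̄ = (∏ᵢ Ω⁰) × C(P²)` with the measure `P̄` determined on cylinders by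
`P̄(A₁×⋯×A_N×B) = ∫_B ∏ᵢ K(Aᵢ,m) ρ(dm)` and `μ` the projection onto `C(P²)`, there is a
sequence `(Λᶦ)` of admissible recommendations with values in `𝔸_{(i)}` whose joint law
under `P̄` is `γ_N(dα) = ∫ ⊗ᵢ κ(dαᶦ,m) ρ(dm)`; in particular each `(Λᶦ,μ)` is distributed
as `(Λ*,μ*)` and the `(Λᶦ)` are conditionally i.i.d. given `μ`. -/
theorem conditionally_iid_recommendations
    (d l : ℕ) (T : ℝ) (A : Set (Ctrl l)) (ν : Measure (Rd d))
    (b : ℝ → Rd d → Measure (Rd d) → Ctrl l → Rd d)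
    (f : ℝ → Rd d → Measure (Rd d) → Ctrl l → ℝ) (g : Rd d → Measure (Rd d) → ℝ)
    (SA : Standing d l T A ν b f g)
    -- the base filtered probability space (Ω*,F*,𝔽*,P*) of the mean field game
    (Ωs : Type) [ms : MeasurableSpace Ωs] [ts : TopologicalSpace Ωs]
    [PolishSpace Ωs] [BorelSpace Ωs]
    (Ps : Measure Ωs) (Fs : ℝ → MeasurableSpace Ωs) (ξs : Ωs → Rd d)
    (Ws : ℝ → Ωs → Rd d) (hbase : IsMFGBase d ν Ps Fs ξs Ws)
    -- the coarse correlated solution ((Ω⁰,F⁰⁻,P⁰),Λ*,μ*) of the mean field game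
    (Ω₀ : Type) [m₀ : MeasurableSpace Ω₀] [t₀ : TopologicalSpace Ω₀]
    [PolishSpace Ω₀] [BorelSpace Ω₀]
    (P₀ : Measure Ω₀) (hP₀ : IsProbabilityMeasure P₀)
    (Λstar : Ω₀ → LpCtrl l T Ps) (lamstar : ℝ → Ω₀ × Ωs → Ctrl l)
    (μstar : Ω₀ → FlowRaw d)
    (hsol : IsCCEMFGSolution T A b f g P₀ Ps Fs ξs Ws Λstar lamstar μstar)
    -- the N-player noise space (Ω¹,F¹,P¹), realized as i.i.d. copies of (Ω*,F*,P*)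
    (Ω₁ : Type) [m₁ : MeasurableSpace Ω₁] (P₁ : Measure Ω₁)
    (ξ : ℕ → Ω₁ → Rd d) (W : ℕ → ℝ → Ω₁ → Rd d)
    (hNbase : IsNPlayerBase d ν P₁ ξ W)
    (π : ℕ → Ω₁ → Ωs) (hπ : ∀ i, MeasurePreserving (π i) P₁ Ps)
    (hξπ : ∀ i, ξ i = fun ω => ξs (π i ω)) (hWπ : ∀ i t, W i t = fun ω => Ws t (π i ω))
    (hπindep : iIndepFun π P₁)
    -- the regular conditional probability K of P⁰ given μ*
    (K : FlowRaw d → Measure Ω₀) (hKmeas : Measurable K)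
    (hKprob : ∀ m, IsProbabilityMeasure (K m))
    (hKdis : ∀ As : Set Ω₀, MeasurableSet As → ∀ S : Set (FlowRaw d), MeasurableSet S →
      P₀ (As ∩ μstar ⁻¹' S) = ∫⁻ m in S, K m As ∂(P₀.map μstar))
    -- the regular conditional law κ of Λ* given μ*
    (kap : FlowRaw d → Measure (LpCtrl l T Ps)) (hkapMeas : Measurable kap)
    (hkapProb : ∀ m, IsProbabilityMeasure (kap m))
    (hkapDis : ∀ C : Set (LpCtrl l T Ps), MeasurableSet C →
      ∀ S : Set (FlowRaw d), MeasurableSet S →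
        P₀ (Λstar ⁻¹' C ∩ μstar ⁻¹' S) = ∫⁻ m in S, kap m C ∂(P₀.map μstar))
    -- the space (Ω̄,F̄,P̄) and its cylinder law
    (Pbar : Measure ((ℕ → Ω₀) × FlowRaw d)) (hPbarProb : IsProbabilityMeasure Pbar)
    (hPbarCyl : ∀ N : ℕ, ∀ As : Fin N → Set Ω₀, (∀ i, MeasurableSet (As i)) →
      ∀ B : Set (FlowRaw d), MeasurableSet B →
        Pbar {ωb : (ℕ → Ω₀) × FlowRaw d | (∀ i : Fin N, ωb.1 i ∈ As i) ∧ ωb.2 ∈ B} =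
          ∫⁻ m in B, ∏ i : Fin N, K m (As i) ∂(P₀.map μstar)) :
    ∃ Λseq : ℕ → ((ℕ → Ω₀) × FlowRaw d) → LpCtrl l T P₁,
      -- (a) each Λⁱ is an admissible recommendation taking values in 𝔸_{(i)}
      (∀ i : ℕ,
        Measurable (Λseq i) ∧
        (∀ ωb, IsOLStrategy T A P₁ (genFilI i P₁ ξ W) (Λseq i ωb)) ∧
        ∃ lami : ℝ → ((ℕ → Ω₀) × FlowRaw d) × Ω₁ → Ctrl l,
          (∀ N : ℕ, 2 ≤ N → i < N →
            ProgMble (fun t =>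
              (MeasurableSpace.prod
                (inferInstance : MeasurableSpace ((ℕ → Ω₀) × FlowRaw d))
                (genFilN N P₁ ξ W t)) ⊔ nullAug (Pbar.prod P₁)) lami) ∧
          (∀ t p, lami t p ∈ A) ∧
          ∀ᵐ ωb ∂Pbar,
            (fun p : ℝ × Ω₁ => lami p.1 (ωb, p.2))
              =ᵐ[(timeMeasure T).prod P₁] ⇑(Λseq i ωb)) ∧
      -- the identification 𝔸 ↪ 𝔸_{(i)} through the i-th coordinate copy of Ω*
      ∃ emb : ℕ → LpCtrl l T Ps → LpCtrl l T P₁,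
        (∀ (i : ℕ) (α : LpCtrl l T Ps),
          (⇑(emb i α)) =ᵐ[(timeMeasure T).prod P₁] fun p => (⇑α) (p.1, π i p.2)) ∧
        -- (b) the joint law of (Λ¹,…,Λᴺ,μ) is γ_N(dα)ρ(dm)
        (∀ N : ℕ, 2 ≤ N → ∀ C : Fin N → Set (LpCtrl l T Ps),
          (∀ i, MeasurableSet (C i)) → ∀ B : Set (FlowRaw d), MeasurableSet B →
          Pbar {ωb : (ℕ → Ω₀) × FlowRaw d |
              (∀ i : Fin N, Λseq i ωb ∈ emb i '' C i) ∧ ωb.2 ∈ B} =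
            ∫⁻ m in B, ∏ i : Fin N, kap m (C i) ∂(P₀.map μstar)) ∧
        -- each pair (Λⁱ, μ) is distributed as (Λ*, μ*)
        ∀ i : ℕ, ∀ C : Set (LpCtrl l T Ps), MeasurableSet C →
          ∀ B : Set (FlowRaw d), MeasurableSet B →
            Pbar {ωb : (ℕ → Ω₀) × FlowRaw d | Λseq i ωb ∈ emb i '' C ∧ ωb.2 ∈ B} =
              P₀ (Λstar ⁻¹' C ∩ μstar ⁻¹' B) := by
  classical
  haveI := hbase.prob
  haveI := hNbase.prob
  haveI := hP₀
  haveI := hPbarProb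
  obtain ⟨hadm, hμmeas, hμflows, -⟩ := hsol
  haveI : IsProbabilityMeasure (P₀.map μstar) := Measure.isProbabilityMeasure_map hμmeas.aemeasurable
  haveI : BorelSpace (LpCtrl l T Ps) := ⟨rfl⟩
  haveI : BorelSpace (LpCtrl l T P₁) := ⟨rfl⟩
  -- the time-and-noise identification maps are measure preserving
  have hψ : ∀ i : ℕ, MeasurePreserving (Prod.map (id : ℝ → ℝ) (π i))
      ((timeMeasure T).prod P₁) ((timeMeasure T).prod Ps) :=
    fun i => (MeasurePreserving.id _).prod (hπ i)
  -- the embedding 𝔸 ↪ 𝔸_{(i)}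
  set emb : ℕ → LpCtrl l T Ps → LpCtrl l T P₁ :=
    fun i α => Lp.compMeasurePreserving (Prod.map (id : ℝ → ℝ) (π i)) (hψ i) α with hembdef
  have hembae : ∀ (i : ℕ) (α : LpCtrl l T Ps),
      (⇑(emb i α)) =ᵐ[(timeMeasure T).prod P₁] fun p : ℝ × Ω₁ => (⇑α) (p.1, π i p.2) :=
    fun i α => Lp.coeFn_compMeasurePreserving α (hψ i)
  have hembinj : ∀ i : ℕ, Function.Injective (emb i) :=
    fun i => (Lp.isometry_compMeasurePreserving (hψ i)).injective
  have hembmeas : ∀ i : ℕ, Measurable (emb i) :=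
    fun i => (Lp.isometry_compMeasurePreserving (hψ i)).continuous.measurable
  -- finite dimensional distributions of the coordinates of Pbar
  have hcoord : ∀ (i : ℕ) (A₀ : Set Ω₀), MeasurableSet A₀ →
      ∀ B : Set (FlowRaw d), MeasurableSet B →
      Pbar {ωb : (ℕ → Ω₀) × FlowRaw d | ωb.1 i ∈ A₀ ∧ ωb.2 ∈ B}
        = ∫⁻ m in B, K m A₀ ∂(P₀.map μstar) := by
    intro i A₀ hA₀ B hB
    have h := hPbarCyl (i + 1) (fun j => if (j : ℕ) = i then A₀ else Set.univ)
      (fun j => by by_cases hj : (j : ℕ) = i <;> simp [hj, hA₀]) B hB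
    have hset : {ωb : (ℕ → Ω₀) × FlowRaw d |
        (∀ j : Fin (i + 1), ωb.1 j ∈ (if (j : ℕ) = i then A₀ else Set.univ)) ∧ ωb.2 ∈ B}
        = {ωb : (ℕ → Ω₀) × FlowRaw d | ωb.1 i ∈ A₀ ∧ ωb.2 ∈ B} := by
      ext ωb
      simp only [Set.mem_setOf_eq, and_congr_left_iff]
      intro _
      constructor
      · intro hall
        have := hall ⟨i, Nat.lt_succ_self i⟩
        simpa using this
      · intro hmem j
        by_cases hj : (j : ℕ) = i
        · simpa [hj] using hmem
        · simp [hj]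
    have hprod : ∀ m : FlowRaw d,
        (∏ j : Fin (i + 1), K m (if (j : ℕ) = i then A₀ else Set.univ)) = K m A₀ := by
      intro m
      haveI := hKprob m
      have heq : ∀ j : Fin (i + 1), K m (if (j : ℕ) = i then A₀ else Set.univ)
          = if j = (⟨i, Nat.lt_succ_self i⟩ : Fin (i + 1)) then K m A₀ else 1 := by
        intro j
        by_cases hj : (j : ℕ) = i
        · simp [hj, Fin.ext_iff]
        · simp [hj, Fin.ext_iff, measure_univ]
      simp only [heq]
      simp [Finset.prod_ite_eq']
    simp only [hprod] at h
    rw [hset] at h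
    exact h
  -- the i-th coordinate marginal of Pbar is P₀
  have hmarg : ∀ (i : ℕ) (A₀ : Set Ω₀), MeasurableSet A₀ →
      Pbar {ωb : (ℕ → Ω₀) × FlowRaw d | ωb.1 i ∈ A₀} = P₀ A₀ := by
    intro i A₀ hA₀
    have h := hcoord i A₀ hA₀ Set.univ MeasurableSet.univ
    have h2 := hKdis A₀ hA₀ Set.univ MeasurableSet.univ
    simp only [Set.preimage_univ, Set.inter_univ, Measure.restrict_univ] at h h2
    simpa [Set.mem_univ, and_true] using h.trans h2.symm
  -- transport of a.e. properties from P₀ to Pbar through the coordinates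
  have hcoord_ae : ∀ (i : ℕ) (Q : Ω₀ → Prop), (∀ᵐ ω₀ ∂P₀, Q ω₀) →
      ∀ᵐ ωb ∂Pbar, Q (ωb.1 i) := by
    intro i Q hQ
    rw [ae_iff] at hQ ⊢
    refine measure_mono_null
      (t := {ωb : (ℕ → Ω₀) × FlowRaw d | ωb.1 i ∈ toMeasurable P₀ {ω₀ | ¬ Q ω₀}})
      (fun ωb h => subset_toMeasurable P₀ _ h) ?_
    rw [hmarg i _ (measurableSet_toMeasurable _ _), measure_toMeasurable]
    exact hQ
  -- the i-th coordinate is measure preserving, hence so is the identification of noises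
  have hcoordmp : ∀ i : ℕ,
      MeasurePreserving (fun ωb : (ℕ → Ω₀) × FlowRaw d => ωb.1 i) Pbar P₀ := by
    intro i
    have hm : Measurable (fun ωb : (ℕ → Ω₀) × FlowRaw d => ωb.1 i) :=
      (measurable_pi_apply i).comp measurable_fst
    refine ⟨hm, ?_⟩
    refine Measure.ext fun s hs => ?_
    rw [Measure.map_apply hm hs]
    exact hmarg i s hs
  have hψ' : ∀ i : ℕ,
      MeasurePreserving (Prod.map (fun ωb : (ℕ → Ω₀) × FlowRaw d => ωb.1 i) (π i))
        (Pbar.prod P₁) (P₀.prod Ps) :=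
    fun i => (hcoordmp i).prod (hπ i)
  -- comparison of filtrations through π i
  have hFs_comap : ∀ (i : ℕ) (t : ℝ),
      MeasurableSpace.comap (π i) (Fs t) ≤ genFilI i P₁ ξ W t := by
    intro i t
    rw [hbase.F_eq t, MeasurableSpace.comap_sup]
    simp only [genFilI]
    refine sup_le (le_trans ?_ le_sup_left) (le_trans ?_ le_sup_right)
    · simp only [genFil, MeasurableSpace.comap_sup, MeasurableSpace.comap_iSup,
        MeasurableSpace.comap_comp]
      refine sup_le (le_trans ?_ le_sup_left) (le_trans ?_ le_sup_right)
      · rw [show ξs ∘ π i = ξ i from (hξπ i).symm]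
      · refine iSup₂_le fun s hs => ?_
        refine le_iSup₂_of_le s hs ?_
        rw [show Ws s ∘ π i = W i s from (hWπ i s).symm]
    · exact comap_nullAug_le (hπ i).measurable
        (fun u hu hu0 => by rw [(hπ i).measure_preimage hu.nullMeasurableSet, hu0])
  have hIN : ∀ (i N : ℕ), i < N → ∀ t : ℝ,
      genFilI i P₁ ξ W t ≤ genFilN N P₁ ξ W t := by
    intro i N hiN t
    simp only [genFilI, genFilN]
    exact sup_le_sup (le_iSup₂_of_le i (Finset.mem_range.mpr hiN) le_rfl) le_rfl
  -- the identification of noises is measurable with respect to the augmented filtrations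
  have hψ'big : ∀ (i N : ℕ), i < N → ∀ t : ℝ,
      @Measurable (((ℕ → Ω₀) × FlowRaw d) × Ω₁) (Ω₀ × Ωs)
        ((MeasurableSpace.prod (inferInstance : MeasurableSpace ((ℕ → Ω₀) × FlowRaw d))
          (genFilN N P₁ ξ W t)) ⊔ nullAug (Pbar.prod P₁))
        ((m₀.prod (Fs t)) ⊔ nullAug (P₀.prod Ps))
        (fun p => (p.1.1 i, π i p.2)) := by
    intro i N hiN t
    rw [measurable_iff_comap_le, MeasurableSpace.comap_sup]
    refine sup_le (le_trans ?_ le_sup_left) (le_trans ?_ le_sup_right)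
    · rw [← measurable_iff_comap_le]
      refine meas_prodMk ?_ ?_
      · exact ((measurable_pi_apply i).comp measurable_fst).comp meas_fst'
      · exact (measurable_iff_comap_le.mpr
          (le_trans (hFs_comap i t) (hIN i N hiN t))).comp meas_snd'
    · exact comap_nullAug_le (hψ' i).measurable
        (fun u hu hu0 => ((hψ' i).measure_preimage hu.nullMeasurableSet).trans hu0)
  -- identification of the conditional kernels K and κ through Λ*
  have hKkap : ∀ C : Set (LpCtrl l T Ps), MeasurableSet C →
      (fun m => K m (Λstar ⁻¹' C)) =ᵐ[P₀.map μstar] fun m => kap m C := by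
    intro C hC
    have hpre : MeasurableSet (Λstar ⁻¹' C) := hadm.meas hC
    refine ae_eq_of_forall_setLIntegral_eq_of_sigmaFinite
      ((Measure.measurable_coe hpre).comp hKmeas)
      ((Measure.measurable_coe hC).comp hkapMeas) ?_
    intro s hs _
    rw [← hKdis _ hpre s hs, ← hkapDis C hC s hs]
  -- the recommendations
  refine ⟨fun i ωb => emb i (Λstar (ωb.1 i)), ?_, emb, hembae, ?_, ?_⟩
  · -- (a) admissibility
    intro i
    refine ⟨(hembmeas i).comp (hadm.meas.comp ((measurable_pi_apply i).comp measurable_fst)),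
      ?_, fun t p => lamstar t (p.1.1 i, π i p.2), ?_, fun t p => hadm.Avalued t _, ?_⟩
    · -- values in 𝔸_{(i)}
      intro ωb
      obtain ⟨u, huprog, huA, huae⟩ := hadm.vals (ωb.1 i)
      refine ⟨fun t ω => u t (π i ω), ?_, fun t ω => huA t (π i ω), ?_⟩
      · intro t
        have hπFsI : @Measurable Ω₁ Ωs (genFilI i P₁ ξ W t) (Fs t) (π i) :=
          measurable_iff_comap_le.mpr (hFs_comap i t)
        exact (huprog t).comp (meas_prodMk meas_fst' (hπFsI.comp meas_snd'))
      · refine (hembae i _).trans ?_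
        exact huae.comp_tendsto (hψ i).quasiMeasurePreserving.tendsto_ae
    · -- progressive measurability of the associated strategy
      intro N hN hiN t
      exact (hadm.prog t).comp
        (meas_prodMk meas_fst' ((hψ'big i N hiN t).comp meas_snd'))
    · -- sections of the associated strategy
      have hQ : ∀ᵐ ω₀ ∂P₀,
          (fun p : ℝ × Ω₁ => lamstar p.1 (ω₀, π i p.2))
            =ᵐ[(timeMeasure T).prod P₁] ⇑(emb i (Λstar ω₀)) := by
        filter_upwards [hadm.sect] with ω₀ hω₀
        exact (hω₀.comp_tendsto (hψ i).quasiMeasurePreserving.tendsto_ae).trans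
          (hembae i _).symm
      exact hcoord_ae i _ hQ
  · -- (b) joint law of (Λ¹,…,Λᴺ,μ)
    intro N hN C hC B hB
    have hset : {ωb : (ℕ → Ω₀) × FlowRaw d |
        (∀ i : Fin N, emb i (Λstar (ωb.1 i)) ∈ emb i '' C i) ∧ ωb.2 ∈ B}
        = {ωb : (ℕ → Ω₀) × FlowRaw d |
            (∀ i : Fin N, ωb.1 i ∈ Λstar ⁻¹' (C i)) ∧ ωb.2 ∈ B} := by
      ext ωb
      simp only [Set.mem_setOf_eq, Set.mem_preimage, and_congr_left_iff]
      intro _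
      exact forall_congr' fun i => (hembinj i).mem_set_image
    have hgoal : Pbar {ωb : (ℕ → Ω₀) × FlowRaw d |
        (∀ i : Fin N, emb i (Λstar (ωb.1 i)) ∈ emb i '' C i) ∧ ωb.2 ∈ B}
        = ∫⁻ m in B, ∏ i : Fin N, kap m (C i) ∂(P₀.map μstar) := by
      rw [hset, hPbarCyl N (fun i => Λstar ⁻¹' C i) (fun i => hadm.meas (hC i)) B hB]
      have hae : ∀ᵐ m ∂(P₀.map μstar), ∀ i : Fin N, K m (Λstar ⁻¹' C i) = kap m (C i) :=
        ae_all_iff.mpr fun i => hKkap (C i) (hC i)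
      have haeprod : (fun m => ∏ i : Fin N, K m (Λstar ⁻¹' C i))
          =ᵐ[P₀.map μstar] fun m => ∏ i : Fin N, kap m (C i) :=
        hae.mono fun m hm => Finset.prod_congr rfl fun i _ => hm i
      exact lintegral_congr_ae (ae_restrict_of_ae haeprod)
    exact hgoal
  · -- each pair (Λⁱ,μ) is distributed as (Λ*,μ*)
    intro i C hC B hB
    have hset : {ωb : (ℕ → Ω₀) × FlowRaw d |
        emb i (Λstar (ωb.1 i)) ∈ emb i '' C ∧ ωb.2 ∈ B}
        = {ωb : (ℕ → Ω₀) × FlowRaw d | ωb.1 i ∈ Λstar ⁻¹' C ∧ ωb.2 ∈ B} := by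
      ext ωb
      simp only [Set.mem_setOf_eq, Set.mem_preimage, (hembinj i).mem_set_image]
    rw [hset, hcoord i _ (hadm.meas hC) B hB]
    exact (hKdis _ (hadm.meas hC) B hB).symm

end CCE
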